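/- arXiv:1601.07808 — 2 statements merged into one kernel-verified Lean document; each statement's English description precedes it below -/
import Mathlib

section
/- Let n ≥ 1 and let Φ : Matrix (Fin n) ℂ →ₗ[ℂ] Matrix (Fin n) ℂ be a positive trace-preserving linear map. Then Φ is unital (Φ 1 = 1) if and only if for every density matrix ρ the eigenvalue vector of Φ ρ is majorized by the eigenvalue vector of ρ; that is, for every k with 1 ≤ k ≤ n, the sum of the k largest eigenvalues of Φ ρ (counted with multiplicity) is at most the sum of the k largest eigenvalues of ρ, and the total sums of eigenvalues agree. -/
/-!
Ky Fan's principle drives the forward direction. For `σ = Φ ρ`, the sum of the `k` largest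
eigenvalues of `σ` is `tr (P σ)` for a rank-`k` spectral projection `P` of `σ`. The functional
`Y ↦ tr (P Φ Y)` lies between `0` and `tr` on positive matrices (`Φ` is positive and trace
preserving) and takes the value `k` at `1` (`Φ` is unital). Any such functional is bounded on `ρ` by
the sum of the `k` largest eigenvalues of `ρ`.

For the converse, apply the hypothesis to the maximally mixed state `1 / n`. Every eigenvalue of
`Φ (1 / n)` is at most `1 / n` and they sum to `1`, so `Φ (1 / n) = 1 / n`.
-/

open scoped Matrix ComplexOrder

/-- A density matrix: positive semidefinite with unit trace. -/
def IsDensityMatrix {n : ℕ} (ρ : Matrix (Fin n) (Fin n) ℂ) : Prop :=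
  ρ.PosSemidef ∧ ρ.trace = 1

/-- The (real) eigenvalues of a matrix, via its Hermitian spectral decomposition
(junk value `0` if the matrix is not Hermitian). -/
noncomputable def eigs {n : ℕ} (A : Matrix (Fin n) (Fin n) ℂ) : Fin n → ℝ :=
  if h : A.IsHermitian then h.eigenvalues else 0

/-- A linear map on matrices is positive if it preserves positive semidefiniteness. -/
def IsPositiveMap {n : ℕ}
    (Φ : Matrix (Fin n) (Fin n) ℂ →ₗ[ℂ] Matrix (Fin n) (Fin n) ℂ) : Prop :=
  ∀ A : Matrix (Fin n) (Fin n) ℂ, A.PosSemidef → (Φ A).PosSemidef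

/-- A linear map on matrices is trace-preserving if it preserves the trace. -/
def IsTracePreserving {n : ℕ}
    (Φ : Matrix (Fin n) (Fin n) ℂ →ₗ[ℂ] Matrix (Fin n) (Fin n) ℂ) : Prop :=
  ∀ A : Matrix (Fin n) (Fin n) ℂ, (Φ A).trace = A.trace


/-- The sum of the `k` largest entries of a vector: the maximum over all `k`-element
index subsets `s` of `∑ i ∈ s, v i`. -/
noncomputable def kMaxSum {n : ℕ} (v : Fin n → ℝ) (k : ℕ) : ℝ :=
  ⨆ s : {s : Finset (Fin n) // s.card = k}, ∑ i ∈ s.1, v i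


namespace Matrix

open Unitary

variable {𝕜 ι : Type*} [RCLike 𝕜] [Fintype ι] [DecidableEq ι]

open scoped MatrixOrder in
lemma PosSemidef.trace_mul_nonneg {A B : Matrix ι ι 𝕜} (hA : A.PosSemidef)
    (hB : B.PosSemidef) : 0 ≤ (A * B).trace := by
  obtain ⟨C, rfl⟩ := CStarAlgebra.nonneg_iff_eq_star_mul_self.mp hB.nonneg
  rw [← Matrix.mul_assoc, trace_mul_comm, ← Matrix.mul_assoc]
  exact (hA.mul_mul_conjTranspose_same C).trace_nonneg

noncomputable def conjDiagonal (U : unitary (Matrix ι ι 𝕜)) : (ι → 𝕜) →ₐ[𝕜] Matrix ι ι 𝕜 :=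
  (conjStarAlgAut 𝕜 _ U).toAlgEquiv.toAlgHom.comp (diagonalAlgHom 𝕜)

lemma conjDiagonal_apply (U : unitary (Matrix ι ι 𝕜)) (d : ι → 𝕜) :
    conjDiagonal U d = U * diagonal d * star (U : Matrix ι ι 𝕜) := rfl

lemma IsHermitian.conjDiagonal_eigenvalues {A : Matrix ι ι 𝕜} (hA : A.IsHermitian) :
    conjDiagonal hA.eigenvectorUnitary (RCLike.ofReal ∘ hA.eigenvalues) = A :=
  hA.spectral_theorem.symm

lemma posSemidef_conjDiagonal_iff (U : unitary (Matrix ι ι 𝕜)) {d : ι → 𝕜} :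
    (conjDiagonal U d).PosSemidef ↔ 0 ≤ d := by
  simp [conjDiagonal_apply, IsUnit.posSemidef_star_right_conjugate_iff isUnit_coe, Pi.le_def]

lemma trace_conjDiagonal (U : unitary (Matrix ι ι 𝕜)) (d : ι → 𝕜) :
    (conjDiagonal U d).trace = ∑ i, d i := by
  rw [conjDiagonal_apply, trace_mul_cycle, coe_star_mul_self, one_mul, trace_diagonal]

lemma conjDiagonal_const (U : unitary (Matrix ι ι 𝕜)) (c : 𝕜) :
    conjDiagonal U (fun _ => c) = c • 1 := by
  rw [← Algebra.algebraMap_eq_smul_one, ← AlgHom.commutes (conjDiagonal U) c]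
  rfl

lemma IsHermitian.eigenvalues_eq_const_iff {A : Matrix ι ι 𝕜} (hA : A.IsHermitian) (r : ℝ) :
    hA.eigenvalues = (fun _ => r) ↔ A = (r : 𝕜) • 1 := by
  constructor
  · intro h
    rw [← hA.conjDiagonal_eigenvalues, h]
    exact conjDiagonal_const _ _
  · rintro rfl
    have hdiag := hA.conjStarAlgAut_star_eigenvectorUnitary
    generalize hA.eigenvalues = e at hdiag ⊢
    rw [map_smul, map_one, ← diagonal_one, ← diagonal_smul] at hdiag
    funext i
    simpa using (congr_fun (diagonal_injective hdiag) i).symm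

end Matrix

section kMaxSum

variable {n k : ℕ}

lemma sum_le_kMaxSum (v : Fin n → ℝ) {s : Finset (Fin n)} (hs : s.card = k) :
    ∑ i ∈ s, v i ≤ kMaxSum v k :=
  le_ciSup (f := fun t : {t : Finset (Fin n) // t.card = k} => ∑ i ∈ t.1, v i)
    (Set.finite_range _).bddAbove ⟨s, hs⟩

lemma exists_sum_eq_kMaxSum (v : Fin n → ℝ) (hk : k ≤ n) :
    ∃ s : Finset (Fin n), s.card = k ∧ ∑ i ∈ s, v i = kMaxSum v k ∧
      ∀ i ∈ s, ∀ j ∉ s, v j ≤ v i := by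
  have hne : (Finset.univ.powersetCard k : Finset (Finset (Fin n))).Nonempty :=
    Finset.powersetCard_nonempty.mpr (by simpa using hk)
  obtain ⟨s, hs, hmax⟩ := (Finset.univ.powersetCard k).exists_max_image (∑ i ∈ ·, v i) hne
  have hcard : s.card = k := Finset.mem_powersetCard_univ.mp hs
  refine ⟨s, hcard, le_antisymm (sum_le_kMaxSum v hcard) ?_, fun i hi j hj => ?_⟩
  · have : Nonempty {s : Finset (Fin n) // s.card = k} := ⟨⟨s, hcard⟩⟩
    exact ciSup_le fun t => hmax t.1 (Finset.mem_powersetCard_univ.mpr t.2)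
  · -- otherwise swapping `i` for `j` would give a `k`-set with a larger sum
    have hj' : j ∉ s.erase i := fun h => hj (Finset.mem_of_mem_erase h)
    have hswap := hmax (insert j (s.erase i)) <| Finset.mem_powersetCard_univ.mpr <| by
      rw [Finset.card_insert_of_notMem hj', Finset.card_erase_of_mem hi, hcard]
      have : 0 < k := hcard ▸ Finset.card_pos.mpr ⟨i, hi⟩
      omega
    rw [Finset.sum_insert hj', Finset.sum_erase_eq_sub hi] at hswap
    linarith

lemma kMaxSum_const (r : ℝ) (hk : k ≤ n) : kMaxSum (fun _ : Fin n => r) k = k * r := by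
  obtain ⟨s, hcard, hs, -⟩ := exists_sum_eq_kMaxSum (fun _ : Fin n => r) hk
  rw [← hs, Finset.sum_const, hcard, nsmul_eq_mul]

lemma sum_mul_le_kMaxSum (v c : Fin n → ℝ) (hk : 0 < k) (hkn : k ≤ n) (hc0 : 0 ≤ c)
    (hc1 : c ≤ 1) (hc : ∑ i, c i = k) : ∑ i, c i * v i ≤ kMaxSum v k := by
  obtain ⟨s, hcard, hs, htop⟩ := exists_sum_eq_kMaxSum v hkn
  have hsne : s.Nonempty := Finset.card_pos.mp (hcard ▸ hk)
  set t := s.inf' hsne v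
  have hout : ∀ j ∈ sᶜ, c j * v j ≤ c j * t := fun j hj =>
    mul_le_mul_of_nonneg_left (Finset.le_inf' hsne v fun i hi => htop i hi j
      (Finset.mem_compl.mp hj)) (hc0 j)
  have hin : ∀ i ∈ s, (1 - c i) * t ≤ (1 - c i) * v i := fun i hi =>
    mul_le_mul_of_nonneg_left (Finset.inf'_le v hi) (sub_nonneg.mpr (hc1 i))
  have hmass : ∑ i ∈ sᶜ, c i = ∑ i ∈ s, (1 - c i) := by
    rw [Finset.sum_sub_distrib, Finset.sum_const, hcard, nsmul_eq_mul, mul_one, ← hc,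
      ← Finset.sum_add_sum_compl s c]
    ring
  calc ∑ i, c i * v i = ∑ i ∈ s, c i * v i + ∑ i ∈ sᶜ, c i * v i :=
        (Finset.sum_add_sum_compl s _).symm
    _ ≤ ∑ i ∈ s, c i * v i + (∑ i ∈ sᶜ, c i) * t := by
        rw [Finset.sum_mul]; exact add_le_add_right (Finset.sum_le_sum hout) _
    _ = ∑ i ∈ s, c i * v i + ∑ i ∈ s, (1 - c i) * t := by rw [hmass, Finset.sum_mul]
    _ ≤ ∑ i ∈ s, c i * v i + ∑ i ∈ s, (1 - c i) * v i :=
        add_le_add_right (Finset.sum_le_sum hin) _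
    _ = kMaxSum v k := by rw [← hs, ← Finset.sum_add_distrib]; congr! 1 with i; ring

end kMaxSum

open Matrix

section Eigs

variable {n k : ℕ}

lemma eigs_eq_eigenvalues {A : Matrix (Fin n) (Fin n) ℂ} (hA : A.IsHermitian) :
    eigs A = hA.eigenvalues :=
  dif_pos hA

lemma ofReal_sum_eigs {A : Matrix (Fin n) (Fin n) ℂ} (hA : A.IsHermitian) :
    ((∑ i, eigs A i : ℝ) : ℂ) = A.trace := by
  rw [hA.trace_eq_sum_eigenvalues, eigs_eq_eigenvalues hA, Complex.ofReal_sum]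
  rfl

lemma exists_projection_trace_mul_eq_kMaxSum {σ : Matrix (Fin n) (Fin n) ℂ}
    (hσ : σ.IsHermitian) (hk : k ≤ n) :
    ∃ P : Matrix (Fin n) (Fin n) ℂ, P.PosSemidef ∧ (1 - P).PosSemidef ∧ P.trace = k ∧
      (P * σ).trace = kMaxSum (eigs σ) k := by
  obtain ⟨s, hcard, hs, -⟩ := exists_sum_eq_kMaxSum (eigs σ) hk
  let U := hσ.eigenvectorUnitary
  let ind : Fin n → ℂ := fun i => if i ∈ s then 1 else 0
  refine ⟨conjDiagonal U ind, ?_, ?_, ?_, ?_⟩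
  · rw [posSemidef_conjDiagonal_iff]
    intro i; by_cases hi : i ∈ s <;> simp [ind, hi]
  · rw [← map_one (conjDiagonal U), ← map_sub, posSemidef_conjDiagonal_iff]
    intro i; by_cases hi : i ∈ s <;> simp [ind, hi]
  · simp [trace_conjDiagonal, ind, Finset.sum_ite_mem, hcard]
  · conv_lhs => rw [← hσ.conjDiagonal_eigenvalues]
    rw [← map_mul, trace_conjDiagonal, ← hs, eigs_eq_eigenvalues hσ]
    simp [ind, ite_mul, Finset.sum_ite_mem]

/-- On the eigenprojections `Q j` of `ρ` the values of `f` are weights in `[0, 1]` summing to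
`k`, and `f ρ` is the corresponding weighted sum of the eigenvalues of `ρ`. -/
lemma le_kMaxSum_eigs_of_nonneg_of_le_trace (f : Matrix (Fin n) (Fin n) ℂ →ₗ[ℂ] ℂ)
    (hf0 : ∀ Y, Y.PosSemidef → 0 ≤ f Y) (hf1 : ∀ Y, Y.PosSemidef → f Y ≤ Y.trace)
    (hf : f 1 = k) (hk : 0 < k) (hkn : k ≤ n) {ρ : Matrix (Fin n) (Fin n) ℂ}
    (hρ : ρ.IsHermitian) : f ρ ≤ kMaxSum (eigs ρ) k := by
  let g := f ∘ₗ (conjDiagonal hρ.eigenvectorUnitary).toLinearMap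
  let Q : Fin n → Matrix (Fin n) (Fin n) ℂ :=
    fun j => conjDiagonal hρ.eigenvectorUnitary fun i => if j = i then 1 else 0
  have hQ : ∀ j, (Q j).PosSemidef := fun j => by
    rw [posSemidef_conjDiagonal_iff]
    intro i; by_cases h : j = i <;> simp [h]
  have hQtr : ∀ j, (Q j).trace = 1 := fun j => by simp [Q, trace_conjDiagonal]
  let c : Fin n → ℝ := fun j => (f (Q j)).re
  have hc : ∀ j, f (Q j) = c j := fun j =>
    Complex.eq_re_of_ofReal_le (r := 0) (by simpa using hf0 _ (hQ j))
  have hc0 : 0 ≤ c := fun j => (Complex.le_def.mp (hf0 _ (hQ j))).1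
  have hc1 : c ≤ 1 := fun j => by simpa [hQtr] using (Complex.le_def.mp (hf1 _ (hQ j))).1
  have hcsum : ∑ j, c j = k := by
    have h := LinearMap.pi_apply_eq_sum_univ g 1
    simp only [g, LinearMap.comp_apply, AlgHom.toLinearMap_apply, map_one, hf, Pi.one_apply,
      one_smul] at h
    have h' : ((∑ j, c j : ℝ) : ℂ) = k := by
      push_cast
      simp_rw [← hc]
      exact h.symm
    exact_mod_cast h'
  have hρc : f ρ = ((∑ j, c j * eigs ρ j : ℝ) : ℂ) := by
    have h := LinearMap.pi_apply_eq_sum_univ g (RCLike.ofReal ∘ hρ.eigenvalues)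
    simp only [g, LinearMap.comp_apply, AlgHom.toLinearMap_apply,
      hρ.conjDiagonal_eigenvalues] at h
    rw [h, eigs_eq_eigenvalues hρ]
    push_cast
    refine Finset.sum_congr rfl fun j _ => ?_
    rw [← hc j, smul_eq_mul, mul_comm]
    rfl
  rw [hρc, Complex.real_le_real]
  exact sum_mul_le_kMaxSum _ _ hk hkn hc0 hc1 hcsum

lemma kMaxSum_eigs_map_le {Φ : Matrix (Fin n) (Fin n) ℂ →ₗ[ℂ] Matrix (Fin n) (Fin n) ℂ}
    (hpos : IsPositiveMap Φ) (htp : IsTracePreserving Φ) (hone : Φ 1 = 1)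
    {ρ : Matrix (Fin n) (Fin n) ℂ} (hρ : ρ.PosSemidef) (hk : 0 < k) (hkn : k ≤ n) :
    kMaxSum (eigs (Φ ρ)) k ≤ kMaxSum (eigs ρ) k := by
  obtain ⟨P, hP, hP1, hPtr, hPσ⟩ := exists_projection_trace_mul_eq_kMaxSum (hpos ρ hρ).1 hkn
  let f := traceLinearMap (Fin n) ℂ ℂ ∘ₗ LinearMap.mulLeft ℂ P ∘ₗ Φ
  have hf1 : ∀ Y, Y.PosSemidef → f Y ≤ Y.trace := fun Y hY => by
    have h := hP1.trace_mul_nonneg (hpos Y hY)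
    rwa [Matrix.sub_mul, one_mul, trace_sub, htp, sub_nonneg] at h
  have h := le_kMaxSum_eigs_of_nonneg_of_le_trace f
    (fun Y hY => hP.trace_mul_nonneg (hpos Y hY)) hf1 (by simp [f, hone, hPtr]) hk hkn hρ.1
  rwa [show f ρ = _ from hPσ, Complex.real_le_real] at h

lemma sum_eigs_map_eq {Φ : Matrix (Fin n) (Fin n) ℂ →ₗ[ℂ] Matrix (Fin n) (Fin n) ℂ}
    (htp : IsTracePreserving Φ) {A : Matrix (Fin n) (Fin n) ℂ} (hA : A.IsHermitian)
    (hΦA : (Φ A).IsHermitian) : ∑ i, eigs (Φ A) i = ∑ i, eigs A i := by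
  exact_mod_cast (ofReal_sum_eigs hΦA).trans ((htp A).trans (ofReal_sum_eigs hA).symm)

end Eigs

noncomputable def maximallyMixed (n : ℕ) : Matrix (Fin n) (Fin n) ℂ :=
  (n : ℂ)⁻¹ • 1

section MaximallyMixed

variable {n : ℕ} [NeZero n]

lemma natCast_smul_maximallyMixed : (n : ℂ) • maximallyMixed n = 1 := by
  rw [maximallyMixed, smul_smul, mul_inv_cancel₀ (NeZero.ne _), one_smul]

lemma isDensityMatrix_maximallyMixed : IsDensityMatrix (maximallyMixed n) := by
  refine ⟨PosSemidef.one.smul ?_, ?_⟩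
  · rw [← Complex.ofReal_natCast, ← Complex.ofReal_inv, Complex.zero_le_real]
    positivity
  · rw [maximallyMixed, trace_smul, trace_one, Fintype.card_fin, smul_eq_mul,
      inv_mul_cancel₀ (NeZero.ne _)]

lemma eigs_maximallyMixed : eigs (maximallyMixed n) = fun _ => (n : ℝ)⁻¹ := by
  have h := (isDensityMatrix_maximallyMixed (n := n)).1.1
  rw [eigs_eq_eigenvalues h, h.eigenvalues_eq_const_iff]
  push_cast
  rfl

lemma eq_maximallyMixed_of_majorized {σ : Matrix (Fin n) (Fin n) ℂ} (hσ : σ.IsHermitian)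
    (hmax : kMaxSum (eigs σ) 1 ≤ kMaxSum (eigs (maximallyMixed n)) 1)
    (hsum : ∑ i, eigs σ i = ∑ i, eigs (maximallyMixed n) i) : σ = maximallyMixed n := by
  rw [eigs_maximallyMixed] at hmax hsum
  have hle : ∀ i, eigs σ i ≤ (n : ℝ)⁻¹ := fun i => by
    have h := (sum_le_kMaxSum (eigs σ) (Finset.card_singleton i)).trans hmax
    rwa [kMaxSum_const _ i.pos, Finset.sum_singleton, Nat.cast_one, one_mul] at h
  have heq := (Finset.sum_eq_sum_iff_of_le fun i _ => hle i).mp hsum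
  have hσ' : hσ.eigenvalues = fun _ => (n : ℝ)⁻¹ :=
    eigs_eq_eigenvalues hσ ▸ funext fun i => heq i (Finset.mem_univ i)
  rw [hσ.eigenvalues_eq_const_iff] at hσ'
  rw [hσ', maximallyMixed]
  push_cast
  rfl

end MaximallyMixed

/-- A positive trace-preserving linear map `Φ` is unital iff for every
density matrix `ρ` the eigenvalue vector of `Φ ρ` is majorized by that of `ρ`. -/
theorem unital_iff_majorization {n : ℕ} (hn : 1 ≤ n)
    (Φ : Matrix (Fin n) (Fin n) ℂ →ₗ[ℂ] Matrix (Fin n) (Fin n) ℂ)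
    (hpos : IsPositiveMap Φ) (htp : IsTracePreserving Φ) :
    Φ 1 = 1 ↔
      ∀ ρ : Matrix (Fin n) (Fin n) ℂ, IsDensityMatrix ρ →
        (∀ k : ℕ, 1 ≤ k → k ≤ n → kMaxSum (eigs (Φ ρ)) k ≤ kMaxSum (eigs ρ) k) ∧
        (∑ i, eigs (Φ ρ) i = ∑ i, eigs ρ i) := by
  constructor
  · intro hone ρ hρ
    exact ⟨fun k hk hkn => kMaxSum_eigs_map_le hpos htp hone hρ.1 hk hkn,
      sum_eigs_map_eq htp hρ.1.1 (hpos ρ hρ.1).1⟩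
  · intro h
    have : NeZero n := .of_pos hn
    have hρ₀ := isDensityMatrix_maximallyMixed (n := n)
    obtain ⟨hmax, hsum⟩ := h _ hρ₀
    have hfix := eq_maximallyMixed_of_majorized (hpos _ hρ₀.1).1 (hmax 1 le_rfl hn) hsum
    rw [← natCast_smul_maximallyMixed, map_smul, hfix]
end

section
/- Let n ≥ 1 and let Φ : Matrix (Fin n) ℂ →ₗ[ℂ] Matrix (Fin n) ℂ be a positive trace-preserving linear map. Then Φ is unital (Φ 1 = 1) if and only if Φ does not decrease the von Neumann entropy, i.e. S(Φ ρ) ≥ S(ρ) for every density matrix ρ. -/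
open scoped Matrix ComplexOrder

/-- The von Neumann entropy `S(ρ) = -∑ λ_k log λ_k` (with `0 · log 0 = 0`). -/
noncomputable def vnEntropy {n : ℕ} (A : Matrix (Fin n) (Fin n) ℂ) : ℝ :=
  -∑ k, eigs A k * Real.log (eigs A k)

/-!
If `Φ` is unital, write `ρ = ∑ᵢ λᵢ vᵢ vᵢ*` and let `(wⱼ)` be an eigenbasis of `Φ ρ`. The
weights `B j i = ⟨wⱼ, Φ (vᵢ vᵢ*) wⱼ⟩` form a doubly stochastic matrix (nonnegative by positivity,
rows sum to `1` by unitality, columns by trace preservation) with `μ = B λ` for the spectrum `μ`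
of `Φ ρ`, so concavity of `x ↦ -x log x` gives `S(ρ) ≤ S(Φ ρ)`.

Conversely, by strict concavity the maximally mixed state `1/n` is the only density matrix of
maximal entropy, so `Φ` must fix it, and `Φ 1 = 1` follows by linearity.
-/

open Matrix Finset

namespace OrthonormalBasis

variable {𝕜 ι : Type*} [RCLike 𝕜] [Fintype ι]
  (b : OrthonormalBasis ι 𝕜 (EuclideanSpace 𝕜 ι))

theorem star_dotProduct_self (i : ι) : star ⇑(b i) ⬝ᵥ ⇑(b i) = 1 := by
  rw [dotProduct_comm, ← EuclideanSpace.inner_eq_star_dotProduct, inner_self_eq_norm_sq_to_K,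
    b.orthonormal.1 i, RCLike.ofReal_one, one_pow]

theorem trace_vecMulVec_self_star (i : ι) : (vecMulVec ⇑(b i) (star ⇑(b i))).trace = 1 := by
  rw [trace_vecMulVec, dotProduct_comm, b.star_dotProduct_self]

variable [DecidableEq ι]

theorem sum_vecMulVec_self_star : ∑ i, vecMulVec ⇑(b i) (star ⇑(b i)) = 1 := by
  have h := congrArg (fun T : EuclideanSpace 𝕜 ι →L[𝕜] EuclideanSpace 𝕜 ι =>
    toEuclideanLin.symm (T : EuclideanSpace 𝕜 ι →ₗ[𝕜] EuclideanSpace 𝕜 ι)) b.sum_rankOne_eq_id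
  simp only [ContinuousLinearMap.toLinearMap_sum, map_sum,
    InnerProductSpace.symm_toEuclideanLin_rankOne] at h
  exact h.trans (toLpLin_symm_id 2)

theorem sum_star_dotProduct_mulVec (M : Matrix ι ι 𝕜) :
    ∑ i, star ⇑(b i) ⬝ᵥ (M *ᵥ ⇑(b i)) = M.trace := by
  rw [← M.trace_toLin_eq (EuclideanSpace.basisFun ι 𝕜).toBasis,
    ← toEuclideanLin_eq_toLin_orthonormal, LinearMap.trace_eq_sum_inner _ b]
  refine sum_congr rfl fun i _ => ?_
  rw [EuclideanSpace.inner_eq_star_dotProduct, dotProduct_comm]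
  rfl

end OrthonormalBasis

namespace Matrix.IsHermitian

variable {𝕜 ι : Type*} [RCLike 𝕜] [Fintype ι] [DecidableEq ι] {A : Matrix ι ι 𝕜}

theorem eq_sum_eigenvalues_smul_vecMulVec (hA : A.IsHermitian) :
    A = ∑ i, (hA.eigenvalues i : 𝕜) •
      vecMulVec ⇑(hA.eigenvectorBasis i) (star ⇑(hA.eigenvectorBasis i)) := by
  conv_lhs => rw [← A.mul_one, ← hA.eigenvectorBasis.sum_vecMulVec_self_star, mul_sum]
  simp_rw [mul_vecMulVec, hA.mulVec_eigenvectorBasis, RCLike.real_smul_eq_coe_smul (K := 𝕜),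
    smul_vecMulVec]

theorem eigenvalues_eq_const_iff_s3 (hA : A.IsHermitian) (c : ℝ) :
    hA.eigenvalues = Function.const ι c ↔ A = (c : 𝕜) • 1 := by
  constructor
  · intro h
    rw [hA.eq_sum_eigenvalues_smul_vecMulVec, h]
    simp_rw [Function.const_apply, ← smul_sum, hA.eigenvectorBasis.sum_vecMulVec_self_star]
  · rintro rfl
    funext i
    rw [hA.eigenvalues_eq, smul_mulVec, one_mulVec, dotProduct_smul,
      hA.eigenvectorBasis.star_dotProduct_self]
    simp

end Matrix.IsHermitian

section Jensen

variable {ι : Type*} [Fintype ι] {s : Set ℝ} {f : ℝ → ℝ}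

theorem ConcaveOn.sum_map_le_sum_map_mulVec [DecidableEq ι] (hf : ConcaveOn ℝ s f)
    {B : Matrix ι ι ℝ} (hB : B ∈ doublyStochastic ℝ ι) {p : ι → ℝ} (hp : ∀ i, p i ∈ s) :
    ∑ i, f (p i) ≤ ∑ j, f ((B *ᵥ p) j) :=
  calc ∑ i, f (p i) = ∑ i, (∑ j, B j i) * f (p i) := by
          simp [sum_col_of_mem_doublyStochastic hB]
    _ = ∑ j, ∑ i, B j i • f (p i) := by
          rw [sum_comm]
          simp [sum_mul]
    _ ≤ ∑ j, f (∑ i, B j i • p i) := sum_le_sum fun j _ =>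
          hf.le_map_sum (fun _ _ => nonneg_of_mem_doublyStochastic hB)
            (sum_row_of_mem_doublyStochastic hB j) fun i _ => hp i
    _ = ∑ j, f ((B *ᵥ p) j) := by simp [mulVec, dotProduct]

theorem StrictConcaveOn.eq_of_sum_map_le [Nonempty ι] (hf : StrictConcaveOn ℝ s f)
    {p : ι → ℝ} (hp : ∀ i, p i ∈ s) {c : ℝ} (hc : ∑ i, p i = Fintype.card ι * c)
    (h : ∑ _i : ι, f c ≤ ∑ i, f (p i)) (i : ι) : p i = c := by
  set w : ℝ := (Fintype.card ι : ℝ)⁻¹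
  have hw : 0 < w := by positivity
  have hsum_w : ∑ _i : ι, w = 1 := by simp [w]
  have hmean : ∑ i, w • p i = c := by
    rw [← smul_sum, hc, smul_eq_mul, ← mul_assoc, inv_mul_cancel₀ (by positivity), one_mul]
  have hJensen : f (∑ i, w • p i) = ∑ i, w • f (p i) := by
    refine le_antisymm ?_ (hf.concaveOn.le_map_sum (fun _ _ => hw.le) hsum_w fun i _ => hp i)
    rw [hmean, ← smul_sum]
    calc f c = w • ∑ _i : ι, f c := by simp [w]
      _ ≤ w • ∑ i, f (p i) := smul_le_smul_of_nonneg_left h hw.le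
  rw [← hmean]
  exact (hf.map_sum_eq_iff (fun _ _ => hw) hsum_w fun i _ => hp i).1 hJensen i (mem_univ i)

end Jensen

section TransitionMatrix

variable {𝕜 ι : Type*} [RCLike 𝕜] [Fintype ι]

noncomputable def transitionMatrix (Φ : Matrix ι ι 𝕜 →ₗ[𝕜] Matrix ι ι 𝕜)
    (v w : OrthonormalBasis ι 𝕜 (EuclideanSpace 𝕜 ι)) : Matrix ι ι ℝ :=
  of fun j i => RCLike.re (star ⇑(w j) ⬝ᵥ (Φ (vecMulVec ⇑(v i) (star ⇑(v i))) *ᵥ ⇑(w j)))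

theorem eigenvalues_map_eq_transitionMatrix_mulVec [DecidableEq ι]
    (Φ : Matrix ι ι 𝕜 →ₗ[𝕜] Matrix ι ι 𝕜) {A : Matrix ι ι 𝕜} (hA : A.IsHermitian)
    (hΦA : (Φ A).IsHermitian) :
    hΦA.eigenvalues =
      transitionMatrix Φ hA.eigenvectorBasis hΦA.eigenvectorBasis *ᵥ hA.eigenvalues := by
  funext j
  rw [hΦA.eigenvalues_eq]
  -- the eigenbasis of `Φ A` depends on `A` through `hΦA`; detach it before rewriting `A`
  generalize hΦA.eigenvectorBasis = w
  conv_lhs => rw [hA.eq_sum_eigenvalues_smul_vecMulVec]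
  simp_rw [map_sum, map_smul, sum_mulVec, smul_mulVec, dotProduct_sum, dotProduct_smul,
    smul_eq_mul, map_sum, RCLike.re_ofReal_mul]
  simp only [mulVec, dotProduct, transitionMatrix, of_apply, mul_comm]

end TransitionMatrix

section DensityMatrix

variable {n : ℕ}

theorem transitionMatrix_mem_doublyStochastic
    {Φ : Matrix (Fin n) (Fin n) ℂ →ₗ[ℂ] Matrix (Fin n) (Fin n) ℂ} (hpos : IsPositiveMap Φ)
    (htp : IsTracePreserving Φ) (hunital : Φ 1 = 1)
    (v w : OrthonormalBasis (Fin n) ℂ (EuclideanSpace ℂ (Fin n))) :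
    transitionMatrix Φ v w ∈ doublyStochastic ℝ (Fin n) := by
  refine mem_doublyStochastic_iff_sum.2 ⟨fun j i => ?_, fun j => ?_, fun i => ?_⟩
  · exact (RCLike.nonneg_iff.1
      ((hpos _ (posSemidef_vecMulVec_self_star _)).dotProduct_mulVec_nonneg _)).1
  · have hsum := congrArg (fun M => star ⇑(w j) ⬝ᵥ (Φ M *ᵥ ⇑(w j))) v.sum_vecMulVec_self_star
    simp only [map_sum, sum_mulVec, dotProduct_sum, hunital, one_mulVec,
      w.star_dotProduct_self] at hsum
    simp_rw [transitionMatrix, of_apply, ← map_sum, hsum, RCLike.one_re]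
  · simp_rw [transitionMatrix, of_apply, ← map_sum, w.sum_star_dotProduct_mulVec, htp _,
      v.trace_vecMulVec_self_star, RCLike.one_re]

theorem vnEntropy_eq_sum_negMulLog {A : Matrix (Fin n) (Fin n) ℂ} (hA : A.IsHermitian) :
    vnEntropy A = ∑ i, Real.negMulLog (hA.eigenvalues i) := by
  simp [vnEntropy, eigs, hA, Real.negMulLog]

namespace IsDensityMatrix

variable {ρ : Matrix (Fin n) (Fin n) ℂ}

theorem sum_eigenvalues (hρ : IsDensityMatrix ρ) : ∑ i, hρ.1.isHermitian.eigenvalues i = 1 := by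
  have h := hρ.1.isHermitian.trace_eq_sum_eigenvalues.symm.trans hρ.2
  rw [← RCLike.ofReal_sum] at h
  exact RCLike.ofReal_injective (h.trans RCLike.ofReal_one.symm)

theorem map {Φ : Matrix (Fin n) (Fin n) ℂ →ₗ[ℂ] Matrix (Fin n) (Fin n) ℂ}
    (hpos : IsPositiveMap Φ) (htp : IsTracePreserving Φ) (hρ : IsDensityMatrix ρ) :
    IsDensityMatrix (Φ ρ) :=
  ⟨hpos ρ hρ.1, (htp ρ).trans hρ.2⟩

end IsDensityMatrix

theorem isDensityMatrix_inv_smul_one (hn : n ≠ 0) :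
    IsDensityMatrix ((((n : ℝ)⁻¹ : ℝ) : ℂ) • (1 : Matrix (Fin n) (Fin n) ℂ)) := by
  refine ⟨PosSemidef.one.smul (by positivity), ?_⟩
  rw [trace_smul, trace_one, Fintype.card_fin, smul_eq_mul]
  push_cast
  exact inv_mul_cancel₀ (Nat.cast_ne_zero.2 hn)

end DensityMatrix

/-- A positive trace-preserving linear map `Φ` is unital iff it does not
decrease the von Neumann entropy of density matrices. -/
theorem unital_iff_vnEntropy_nondecreasing {n : ℕ} (hn : 1 ≤ n)
    (Φ : Matrix (Fin n) (Fin n) ℂ →ₗ[ℂ] Matrix (Fin n) (Fin n) ℂ)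
    (hpos : IsPositiveMap Φ) (htp : IsTracePreserving Φ) :
    Φ 1 = 1 ↔
      ∀ ρ : Matrix (Fin n) (Fin n) ℂ, IsDensityMatrix ρ →
        vnEntropy ρ ≤ vnEntropy (Φ ρ) := by
  refine ⟨fun hunital ρ hρ => ?_, fun hent => ?_⟩
  · have hΦρ := (hρ.map hpos htp).1
    rw [vnEntropy_eq_sum_negMulLog hρ.1.isHermitian, vnEntropy_eq_sum_negMulLog hΦρ.isHermitian,
      eigenvalues_map_eq_transitionMatrix_mulVec Φ hρ.1.isHermitian hΦρ.isHermitian]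
    exact Real.concaveOn_negMulLog.sum_map_le_sum_map_mulVec
      (transitionMatrix_mem_doublyStochastic hpos htp hunital _ _) hρ.1.eigenvalues_nonneg
  · set c : ℝ := (n : ℝ)⁻¹
    have : Nonempty (Fin n) := ⟨⟨0, hn⟩⟩
    have hρ₀ : IsDensityMatrix ((c : ℂ) • 1 : Matrix (Fin n) (Fin n) ℂ) :=
      isDensityMatrix_inv_smul_one (by omega)
    have hσ := hρ₀.map hpos htp
    have hfix : Φ ((c : ℂ) • 1) = (c : ℂ) • 1 := by
      refine (hσ.1.isHermitian.eigenvalues_eq_const_iff_s3 c).1 (funext fun i => ?_)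
      rw [Function.const_apply]
      refine Real.strictConcaveOn_negMulLog.eq_of_sum_map_le hσ.1.eigenvalues_nonneg ?_ ?_ i
      · rw [hσ.sum_eigenvalues, Fintype.card_fin, mul_inv_cancel₀ (by positivity)]
      · have h := hent _ hρ₀
        rwa [vnEntropy_eq_sum_negMulLog hρ₀.1.isHermitian,
          vnEntropy_eq_sum_negMulLog hσ.1.isHermitian,
          (hρ₀.1.isHermitian.eigenvalues_eq_const_iff_s3 c).2 rfl] at h
    have hscale : (n : ℂ) * c = 1 := by
      push_cast [c]
      exact mul_inv_cancel₀ (by positivity)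
    calc Φ 1 = (n : ℂ) • Φ ((c : ℂ) • 1) := by rw [← map_smul, smul_smul, hscale, one_smul]
      _ = 1 := by rw [hfix, smul_smul, hscale, one_smul]
end
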